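/- arXiv:2604.11966 — 2 statements merged into one kernel-verified Lean document; each statement's English description precedes it below -/
import Mathlib

section
/- With Φ, Φ⁺ and S_λ = {α ∈ Φ⁺ : ⟨λ,α⟩ ≤ 0} ∪ {α ∈ −Φ⁺ : ⟨λ,α⟩ ≤ −1} as above: if α, β ∈ S_λ and α + β ∈ Φ, then α + β ∈ S_λ. -/
/-- The set of roots `S_λ = {α ∈ Φ⁺ : ⟨λ,α⟩ ≤ 0} ∪ {α ∈ −Φ⁺ : ⟨λ,α⟩ ≤ −1}` of the
Borel subgroup `B_λ = G ∩ Ad(t^λ)I`. -/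
def SRoots {X : Type*} [AddCommGroup X] (Φp : Finset (X →+ ℤ)) (l : X) :
    Set (X →+ ℤ) :=
  {α | (α ∈ Φp ∧ α l ≤ 0) ∨ (-α ∈ Φp ∧ α l ≤ -1)}

/-! Adding two roots of `S_λ` that both lie in `Φ⁺` stays in `Φ⁺` by closedness, and `λ` still
pairs non-positively with the sum. In every other case one summand pairs with `λ` to at most `-1`
and the other to at most `0`, so the sum pairs to at most `-1`; such a root of `Φ` lies in `S_λ`
whichever of `Φ⁺`, `-Φ⁺` contains it. -/

theorem Finset.mem_or_neg_mem_of_mem_union_image_neg {G : Type*} [AddGroup G] [DecidableEq G]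
    {s : Finset G} {g : G} (hg : g ∈ s ∪ s.image (fun a => -a)) : g ∈ s ∨ -g ∈ s := by
  rw [Finset.mem_union, Finset.mem_image] at hg
  rcases hg with hg | ⟨a, ha, rfl⟩
  · exact Or.inl hg
  · exact Or.inr (by rwa [neg_neg])

namespace SRoots

variable {X : Type*} [AddCommGroup X] {Φp : Finset (X →+ ℤ)} {l : X} {α β : X →+ ℤ}

theorem apply_le_zero (hα : α ∈ SRoots Φp l) : α l ≤ 0 := by
  rcases hα with ⟨-, h⟩ | ⟨-, h⟩ <;> omega

theorem apply_le_neg_one_of_notMem (hα : α ∈ SRoots Φp l) (hαp : α ∉ Φp) : α l ≤ -1 := by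
  rcases hα with ⟨h, -⟩ | ⟨-, h⟩
  · exact absurd h hαp
  · exact h

theorem mem_of_apply_le_neg_one (hα : α ∈ Φp ∨ -α ∈ Φp) (h : α l ≤ -1) : α ∈ SRoots Φp l := by
  rcases hα with hα | hα
  · exact Or.inl ⟨hα, by omega⟩
  · exact Or.inr ⟨hα, h⟩

theorem add_apply_le_neg_one (hα : α ∈ SRoots Φp l) (hβ : β ∈ SRoots Φp l)
    (hαβ : ¬(α ∈ Φp ∧ β ∈ Φp)) : (α + β) l ≤ -1 := by
  have hα0 := apply_le_zero hα
  have hβ0 := apply_le_zero hβ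
  rw [AddMonoidHom.add_apply]
  by_cases hαp : α ∈ Φp
  · have := apply_le_neg_one_of_notMem hβ (fun hβp => hαβ ⟨hαp, hβp⟩)
    omega
  · have := apply_le_neg_one_of_notMem hα hαp
    omega

end SRoots

theorem SRoots_closed_general {X : Type*} [AddCommGroup X] [DecidableEq (X →+ ℤ)]
    (Φ Φp : Finset (X →+ ℤ))
    (hΦ : Φ = Φp ∪ Φp.image (fun α => -α))
    (hclosed : ∀ α ∈ Φp, ∀ β ∈ Φp, α + β ∈ Φ → α + β ∈ Φp)
    (l : X) (α β : X →+ ℤ)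
    (hα : α ∈ SRoots Φp l) (hβ : β ∈ SRoots Φp l) (hαβ : α + β ∈ Φ) :
    α + β ∈ SRoots Φp l := by
  by_cases hpos : α ∈ Φp ∧ β ∈ Φp
  · refine Or.inl ⟨hclosed α hpos.1 β hpos.2 hαβ, ?_⟩
    rw [AddMonoidHom.add_apply]
    exact add_nonpos (SRoots.apply_le_zero hα) (SRoots.apply_le_zero hβ)
  · exact SRoots.mem_of_apply_le_neg_one
      (Finset.mem_or_neg_mem_of_mem_union_image_neg (hΦ ▸ hαβ))
      (SRoots.add_apply_le_neg_one hα hβ hpos)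

/-- If `α, β ∈ S_λ` and `α + β ∈ Φ`, then `α + β ∈ S_λ` (closedness of `S_λ`). -/
theorem SRoots_closed {X : Type*} [AddCommGroup X] [DecidableEq (X →+ ℤ)]
    (Φ Φp : Finset (X →+ ℤ))
    (h0 : (0 : X →+ ℤ) ∉ Φ)
    (hdisj : Disjoint Φp (Φp.image (fun α => -α)))
    (hΦ : Φ = Φp ∪ Φp.image (fun α => -α))
    (hclosed : ∀ α ∈ Φp, ∀ β ∈ Φp, α + β ∈ Φ → α + β ∈ Φp)
    (l : X) (α β : X →+ ℤ)
    (hα : α ∈ SRoots Φp l) (hβ : β ∈ SRoots Φp l) (hαβ : α + β ∈ Φ) :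
    α + β ∈ SRoots Φp l :=
  SRoots_closed_general Φ Φp hΦ hclosed l α β hα hβ hαβ
end

section
/- Let K be an infinite field, and let X, A ∈ M_n(K). Suppose that the characteristic polynomial of X + sA is equal to the characteristic polynomial of X for every s ∈ K. Then A is nilpotent. -/
/-!
For `c ≠ 0`, evaluating both characteristic polynomials at `c⁻¹` with `s = d / c` turns the
hypothesis into `det (1 - d A - c X) = det (1 - c X)`. Both sides are polynomials in `c`, so the
identity persists at `c = 0`: `det (1 - d A) = 1` for every `d`. Hence
`χ_A(t) = tⁿ det (1 - t⁻¹ A) = tⁿ` for `t ≠ 0`, so `χ_A = Xⁿ` and Cayley–Hamilton gives `Aⁿ = 0`.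
-/

open Polynomial

namespace Matrix

variable {ι R : Type*} [Fintype ι] [DecidableEq ι]

lemma eval_det_map_C_add_X_smul [CommRing R] (M N : Matrix ι ι R) (c : R) :
    (M.map C + (Polynomial.X : R[X]) • N.map C).det.eval c = (M + c • N).det := by
  rw [← coe_evalRingHom, RingHom.map_det]
  congr 1
  ext i j
  simp only [RingHom.mapMatrix_apply, coe_evalRingHom, map_apply, add_apply, smul_apply,
    smul_eq_mul, eval_add, eval_C, eval_mul, eval_X]

lemma det_eq_of_forall_ne_zero [CommRing R] [IsDomain R] [Infinite R] {M M' N N' : Matrix ι ι R}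
    (h : ∀ c ≠ (0 : R), (M + c • N).det = (M' + c • N').det) : M.det = M'.det := by
  have hpoly : (M.map C + (Polynomial.X : R[X]) • N.map C).det
      = (M'.map C + (Polynomial.X : R[X]) • N'.map C).det := by
    refine eq_of_infinite_eval_eq _ _ ((Set.finite_singleton 0).infinite_compl.mono fun c hc => ?_)
    simp only [Set.mem_ofPred_eq, eval_det_map_C_add_X_smul]
    exact h c hc
  simpa [eval_det_map_C_add_X_smul] using congr_arg (eval 0) hpoly

lemma eval_inv_charpoly [Field R] (M : Matrix ι ι R) {t : R} (ht : t ≠ 0) :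
    M.charpoly.eval t⁻¹ = t⁻¹ ^ Fintype.card ι * (1 - t • M).det := by
  rw [eval_charpoly, ← det_smul, smul_sub, smul_smul, inv_mul_cancel₀ ht, one_smul,
    smul_one_eq_diagonal, scalar_apply]

lemma isNilpotent_of_forall_det_one_sub_smul [Field R] [Infinite R] {A : Matrix ι ι R}
    (h : ∀ t : R, (1 - t • A).det = 1) : IsNilpotent A := by
  have hchar : A.charpoly = Polynomial.X ^ Fintype.card ι := by
    refine eq_of_infinite_eval_eq _ _ ((Set.finite_singleton 0).infinite_compl.mono fun t ht => ?_)
    have ht : t⁻¹ ≠ 0 := inv_ne_zero ht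
    simpa [h] using A.eval_inv_charpoly ht
  exact ⟨Fintype.card ι, by simpa [hchar] using A.aeval_self_charpoly⟩

end Matrix

/-- Let `K` be an infinite field and `X, A ∈ M_n(K)`.  If the characteristic
polynomial of `X + sA` equals that of `X` for every `s ∈ K`, then `A` is
nilpotent. -/
theorem nilpotent_of_const_charpoly {n : ℕ} {K : Type*} [Field K] [Infinite K]
    (X A : Matrix (Fin n) (Fin n) K)
    (h : ∀ s : K, (X + s • A).charpoly = X.charpoly) :
    IsNilpotent A := by
  refine Matrix.isNilpotent_of_forall_det_one_sub_smul fun d => ?_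
  have hpencil : ∀ c ≠ (0 : K), (1 - d • A + c • -X).det = (1 + c • -X).det := by
    intro c hc
    have hc' := congr_arg (eval c⁻¹) (h (c⁻¹ * d))
    rw [Matrix.eval_inv_charpoly _ hc, Matrix.eval_inv_charpoly _ hc, smul_add, smul_smul,
      mul_inv_cancel_left₀ hc] at hc'
    convert mul_left_cancel₀ (pow_ne_zero _ (inv_ne_zero hc)) hc' using 2 <;> module
  simpa using Matrix.det_eq_of_forall_ne_zero hpencil
end
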